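/- arXiv:2305.03018 — 2 statements merged into one kernel-verified Lean document; each statement's English description precedes it below -/
import Mathlib

section
/- Let f, b : (Fin N → ℤ) → WithBot ℕ be an image and a filter, each with finite support (F = {x | f x ≠ ⊥} and B = {y | b y ≠ ⊥} finite). Then for every x ∈ ℤ^N, the dilation value equals a polynomial degree: (f ⊕ b)(x) = degree( Σ_{y ∈ B} δ′(f(x − y)) · δ′(b(y)) ), where (f ⊕ b)(x) = sup_{y ∈ ℤ^N} ( f(x − y) + b(y) ) is the supremum in WithBot ℕ, the sum of polynomials is over the finite set B, and in particular both sides are ⊥ when no y ∈ B has x − y ∈ F. -/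
/-!
`δ′` turns `WithBot ℕ` with `+` into monomials with `*`, and a sum of monomials with nonnegative
coefficients cannot cancel, so its degree is the largest exponent occurring. Hence the degree of
`∑_{y ∈ B} δ′(f (x - y) + b y)` is the maximum of `f (x - y) + b y` over `y ∈ B`, which is the
dilation value because every `y ∉ B` contributes `⊥`.
-/

open Polynomial

/-- `δ′ : WithBot ℕ → ℝ[X]` sends `⊥` to the zero polynomial and `a : ℕ` to `X ^ a`. -/
noncomputable def deltaInv : WithBot ℕ → ℝ[X] :=
  WithBot.recBotCoe 0 (fun a => X ^ a)

theorem ciSup_eq_finset_sup_of_eq_bot {α ι : Type*} [ConditionallyCompleteLinearOrderBot α]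
    (s : Finset ι) (f : ι → α) (hf : ∀ i ∉ s, f i = ⊥) : ⨆ i, f i = s.sup f := by
  have le_sup : ∀ i, f i ≤ s.sup f := fun i => by
    by_cases hi : i ∈ s
    · exact Finset.le_sup hi
    · simp [hf i hi]
  exact le_antisymm (ciSup_le' le_sup)
    (Finset.sup_le fun i _ => le_ciSup ⟨s.sup f, Set.forall_mem_range.2 le_sup⟩ i)

theorem degree_sum_of_coeff_nonneg {R ι : Type*} [Semiring R] [PartialOrder R]
    [IsOrderedAddMonoid R] (s : Finset ι) (p : ι → R[X])
    (hp : ∀ i ∈ s, ∀ n, 0 ≤ (p i).coeff n) :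
    (∑ i ∈ s, p i).degree = s.sup fun i => (p i).degree := by
  refine le_antisymm (degree_sum_le s p) (Finset.sup_le fun i hi => ?_)
  by_cases hpi : p i = 0
  · simp [hpi]
  refine degree_le_degree fun hsum => hpi (leadingCoeff_eq_zero.1 ?_)
  rw [finsetSum_coeff, Finset.sum_eq_zero_iff_of_nonneg fun j hj => hp j hj _] at hsum
  exact hsum i hi

theorem degree_deltaInv (u : WithBot ℕ) : (deltaInv u).degree = u := by
  induction u using WithBot.recBotCoe with
  | bot => simp [deltaInv]
  | coe a => simp [deltaInv, Nat.cast_withBot]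

theorem deltaInv_add (u v : WithBot ℕ) : deltaInv (u + v) = deltaInv u * deltaInv v := by
  induction u using WithBot.recBotCoe with
  | bot => simp [deltaInv]
  | coe a =>
    induction v using WithBot.recBotCoe with
    | bot => simp [deltaInv]
    | coe c => simp [deltaInv, ← WithBot.coe_add, pow_add]

theorem coeff_deltaInv_nonneg (u : WithBot ℕ) (n : ℕ) : 0 ≤ (deltaInv u).coeff n := by
  induction u using WithBot.recBotCoe with
  | bot => simp [deltaInv]
  | coe a =>
    simp only [deltaInv, WithBot.recBotCoe_coe, coeff_X_pow]
    split_ifs <;> norm_num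

theorem degree_sum_deltaInv {ι : Type*} (s : Finset ι) (u : ι → WithBot ℕ) :
    (∑ i ∈ s, deltaInv (u i)).degree = s.sup u := by
  rw [degree_sum_of_coeff_nonneg s _ fun i _ => coeff_deltaInv_nonneg (u i)]
  simp only [degree_deltaInv]

theorem dilation_eq_degree_sum_general (N : ℕ) (f b : (Fin N → ℤ) → WithBot ℕ)
    (hB : {y : Fin N → ℤ | b y ≠ ⊥}.Finite)
    (x : Fin N → ℤ) :
    (⨆ y : Fin N → ℤ, f (x - y) + b y) =
      (∑ y ∈ hB.toFinset, deltaInv (f (x - y)) * deltaInv (b y)).degree := by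
  simp_rw [← deltaInv_add]
  rw [degree_sum_deltaInv]
  refine ciSup_eq_finset_sup_of_eq_bot _ _ fun y hy => ?_
  rw [Set.Finite.mem_toFinset, Set.mem_ofPred_eq, not_not] at hy
  rw [hy, WithBot.add_bot]

/-- For an image `f` and a filter `b` on `ℤ^N` with values in `WithBot ℕ` and finite
supports, the dilation value `(f ⊕ b)(x) = ⨆ y, f (x - y) + b y` equals the degree of
the polynomial `∑_{y ∈ B} δ′(f (x - y)) * δ′(b y)`, where `B` is the support of `b`. -/
theorem dilation_eq_degree_sum (N : ℕ) (f b : (Fin N → ℤ) → WithBot ℕ)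
    (hF : {x : Fin N → ℤ | f x ≠ ⊥}.Finite) (hB : {y : Fin N → ℤ | b y ≠ ⊥}.Finite)
    (x : Fin N → ℤ) :
    (⨆ y : Fin N → ℤ, f (x - y) + b y) =
      (∑ y ∈ hB.toFinset, deltaInv (f (x - y)) * deltaInv (b y)).degree :=
  dilation_eq_degree_sum_general N f b hB x
end

section
/- Let f, b : (Fin N → ℤ) → WithBot ℕ have finite supports F and B, and let u_f, u_b : (Fin N → ℤ) × ℤ → ℝ be their umbra indicators: u_f(x, t) = 1 if t ≥ 0 and f(x) = t, and 0 otherwise (likewise u_b). Then for every x ∈ ℤ^N and t ∈ ℤ, the value of the discrete linear convolution equals the number of decompositions realizing grey value t: (u_f ⋆ u_b)(x, t) = card { y ∈ ℤ^N | f(x − y) ≠ ⊥ ∧ b(y) ≠ ⊥ ∧ f(x − y) + b(y) = t }, where (u_f ⋆ u_b)(x, t) = Σ_{y ∈ ℤ^N} Σ_{s ∈ ℤ} u_f(x − y, t − s) · u_b(y, s), a finite sum, and the cardinality on the right is cast from ℕ into ℝ. -/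
/-!
For fixed `y`, the factor `u_b (y, s)` vanishes unless `s = b y`, so the inner sum over grey
levels `s` is the indicator of the event `f (x - y) + b y = t`. Summing this indicator over `y`,
a finite sum because `b` has finite support, counts the decompositions.
-/

open scoped Classical in
/-- The umbra indicator of an image `f : ℤ^N → WithBot ℕ`: `u_f (x, t) = 1` if `t ≥ 0`
and `f x` equals the natural number `t`, and `0` otherwise. -/
noncomputable def umbra {N : ℕ} (f : (Fin N → ℤ) → WithBot ℕ) :
    (Fin N → ℤ) × ℤ → ℝ :=
  fun p => if ∃ n : ℕ, (n : ℤ) = p.2 ∧ f p.1 = (n : WithBot ℕ) then 1 else 0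

/-- Discrete linear convolution of functions on `ℤ^N × ℤ`:
`(u ⋆ v)(x, t) = ∑_{y, s} u (x - y, t - s) * v (y, s)`. -/
noncomputable def conv {N : ℕ} (u v : (Fin N → ℤ) × ℤ → ℝ) :
    (Fin N → ℤ) × ℤ → ℝ :=
  fun p => ∑ᶠ (y : Fin N → ℤ), ∑ᶠ (s : ℤ), u (p.1 - y, p.2 - s) * v (y, s)

section Umbra

variable {N : ℕ} {f : (Fin N → ℤ) → WithBot ℕ} {x : Fin N → ℤ}

theorem umbra_of_eq_bot (hx : f x = ⊥) (t : ℤ) : umbra f (x, t) = 0 := by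
  simp [umbra, hx]

theorem umbra_of_eq_coe {p : ℕ} (hx : f x = p) (t : ℤ) :
    umbra f (x, t) = if t = p then 1 else 0 := by
  by_cases ht : t = p <;> simp [umbra, hx, ht, eq_comm]

theorem finsum_mul_umbra_of_eq_coe (u : ℤ → ℝ) {p : ℕ} (hx : f x = p) :
    ∑ᶠ s, u s * umbra f (x, s) = u p := by
  rw [finsum_eq_single _ (p : ℤ) fun s hs => by simp [umbra_of_eq_coe hx, hs]]
  simp [umbra_of_eq_coe hx]

end Umbra

open scoped Classical in
theorem finsum_umbra_mul_umbra {N : ℕ} (f b : (Fin N → ℤ) → WithBot ℕ) (z y : Fin N → ℤ)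
    (t : ℤ) :
    ∑ᶠ s, umbra f (z, t - s) * umbra b (y, s) =
      if f z ≠ ⊥ ∧ b y ≠ ⊥ ∧ ∃ n : ℕ, (n : ℤ) = t ∧ f z + b y = (n : WithBot ℕ)
      then 1 else 0 := by
  cases hb : b y using WithBot.recBotCoe with
  | bot => simp [umbra_of_eq_bot hb]
  | coe q =>
    rw [finsum_mul_umbra_of_eq_coe (fun s => umbra f (z, t - s)) hb]
    cases hf : f z using WithBot.recBotCoe with
    | bot => simp [umbra_of_eq_bot hf]
    | coe p =>
      rw [umbra_of_eq_coe hf]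
      refine if_congr ?_ rfl rfl
      simp only [ne_eq, WithBot.coe_ne_bot, not_false_eq_true, true_and, Nat.cast_withBot,
        ← WithBot.coe_add, WithBot.coe_inj]
      constructor
      · intro h
        exact ⟨p + q, by omega, rfl⟩
      · rintro ⟨n, rfl, rfl⟩
        omega

theorem conv_umbra_eq_card_general (N : ℕ) (f b : (Fin N → ℤ) → WithBot ℕ)
    (hB : {y : Fin N → ℤ | b y ≠ ⊥}.Finite)
    (x : Fin N → ℤ) (t : ℤ) :
    conv (umbra f) (umbra b) (x, t) =
      ({y : Fin N → ℤ | f (x - y) ≠ ⊥ ∧ b y ≠ ⊥ ∧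
          ∃ n : ℕ, (n : ℤ) = t ∧ f (x - y) + b y = (n : WithBot ℕ)}.ncard : ℝ) := by
  classical
  set S := {y : Fin N → ℤ | f (x - y) ≠ ⊥ ∧ b y ≠ ⊥ ∧
      ∃ n : ℕ, (n : ℤ) = t ∧ f (x - y) + b y = (n : WithBot ℕ)}
  have hS : S.Finite := hB.subset fun _ hy => hy.2.1
  calc conv (umbra f) (umbra b) (x, t) = ∑ᶠ y, S.indicator 1 y :=
        finsum_congr fun y => by
          rw [finsum_umbra_mul_umbra, Set.indicator_apply]
          exact if_congr Iff.rfl rfl rfl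
    _ = ∑ᶠ y ∈ S, (1 : ℝ) := (finsum_mem_def _ _).symm
    _ = ((∑ᶠ y ∈ S, 1 : ℕ) : ℝ) := by rw [Nat.cast_finsum_mem hS, Nat.cast_one]
    _ = S.ncard := by rw [finsum_one]

/-- For finitely supported image `f` and filter `b`, the convolution of their umbra
indicators at `(x, t)` counts the decompositions `x = (x - y) + y` realizing grey
value `t`: `(u_f ⋆ u_b)(x, t) = card {y | f (x − y) ≠ ⊥ ∧ b y ≠ ⊥ ∧ f (x − y) + b y = t}`. -/
theorem conv_umbra_eq_card (N : ℕ) (f b : (Fin N → ℤ) → WithBot ℕ)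
    (hF : {x : Fin N → ℤ | f x ≠ ⊥}.Finite) (hB : {y : Fin N → ℤ | b y ≠ ⊥}.Finite)
    (x : Fin N → ℤ) (t : ℤ) :
    conv (umbra f) (umbra b) (x, t) =
      ({y : Fin N → ℤ | f (x - y) ≠ ⊥ ∧ b y ≠ ⊥ ∧
          ∃ n : ℕ, (n : ℤ) = t ∧ f (x - y) + b y = (n : WithBot ℕ)}.ncard : ℝ) :=
  conv_umbra_eq_card_general N f b hB x t
end
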